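/- arXiv:1202.1811 — 4 statements merged into one kernel-verified Lean document; each statement's English description precedes it below -/
import Mathlib

section
/- With the logarithmic polynomials R_p^k defined recursively as above, one has R_p^{±(p−1)}(x) = (p/2^{p−1})·x for all p ≥ 1. -/
/-- The logarithmic polynomials `R_p^k`. -/
noncomputable def logPoly : ℕ → ℤ → ℝ → ℝ
  | 0, k, _ => if k = 0 then 1 else 0
  | p + 1, k, x =>
      (1 / 2) * logPoly p (k - 1) x + x * logPoly p k x + (1 / 2) * logPoly p (k + 1) x

lemma logPoly_zero (p : ℕ) : ∀ k : ℤ, (p : ℤ) < |k| → ∀ x : ℝ, logPoly p k x = 0 := by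
  induction p with
  | zero =>
    intro k hk x
    simp only [logPoly]
    rw [if_neg]
    intro h; simp [h] at hk
  | succ p ih =>
    intro k hk x
    push_cast at hk
    simp only [logPoly]
    rw [ih (k - 1) (by cases abs_cases k <;> cases abs_cases (k - 1) <;> omega) x,
      ih k (by cases abs_cases k <;> omega) x,
      ih (k + 1) (by cases abs_cases k <;> cases abs_cases (k + 1) <;> omega) x]
    ring

lemma logPoly_succ (p : ℕ) (k : ℤ) (x : ℝ) :
    logPoly (p + 1) k x =
      (1 / 2) * logPoly p (k - 1) x + x * logPoly p k x + (1 / 2) * logPoly p (k + 1) x := rfl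

lemma logPoly_symm (p : ℕ) : ∀ k : ℤ, ∀ x : ℝ, logPoly p (-k) x = logPoly p k x := by
  induction p with
  | zero => intro k x; simp [logPoly, neg_eq_zero]
  | succ p ih =>
    intro k x
    simp only [logPoly]
    have h1 : -k - 1 = -(k + 1) := by ring
    have h2 : -k + 1 = -(k - 1) := by ring
    rw [h1, h2, ih, ih, ih]
    ring

lemma logPoly_top (p : ℕ) (x : ℝ) : logPoly p p x = 1 / 2 ^ p := by
  induction p with
  | zero => simp [logPoly]
  | succ p ih =>
    simp only [logPoly]
    push_cast
    rw [add_sub_cancel_right, ih,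
      logPoly_zero p ((p : ℤ) + 1) (by cases abs_cases ((p:ℤ)+1) <;> omega) x,
      logPoly_zero p ((p : ℤ) + 1 + 1) (by cases abs_cases ((p:ℤ)+1+1) <;> omega) x]
    ring

theorem logPoly_sub_one (p : ℕ) (hp : 1 ≤ p) (x : ℝ) :
    logPoly p ((p : ℤ) - 1) x = (p / 2 ^ (p - 1)) * x ∧
    logPoly p (-((p : ℤ) - 1)) x = (p / 2 ^ (p - 1)) * x := by
  have key : ∀ q : ℕ, 1 ≤ q → logPoly q ((q : ℤ) - 1) x = (q / 2 ^ (q - 1)) * x := by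
    intro q hq
    induction q with
    | zero => omega
    | succ q ih =>
      match q, ih with
      | 0, _ =>
        simp only [logPoly]
        norm_num [logPoly]
      | r + 1, ih =>
        rw [logPoly_succ]
        push_cast
        have e3 : (r : ℤ) + 1 + 1 - 1 + 1 = (r : ℤ) + 1 + 1 := by ring
        have e1 : (r : ℤ) + 1 + 1 - 1 - 1 = (r : ℤ) + 1 - 1 := by ring
        have e2 : (r : ℤ) + 1 + 1 - 1 = (r : ℤ) + 1 := by ring
        have ih' := ih (by omega)
        push_cast at ih'
        rw [e3, e1, e2, ih']
        have := logPoly_top (r + 1) x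
        push_cast at this
        rw [this,
          logPoly_zero (r + 1) ((r : ℤ) + 1 + 1)
            (by cases abs_cases ((r:ℤ)+1+1) <;> omega) x]
        field_simp
        ring
  refine ⟨key p hp, ?_⟩
  rw [logPoly_symm]
  exact key p hp
end

section
/- The derivative of the logarithmic polynomial satisfies d/dx R_p^k(x) = p·R_{p−1}^k(x) for all p ≥ 1 and all k ∈ ℤ. -/
lemma logPoly_zero_s9 (k : ℤ) : (fun x : ℝ => logPoly 0 k x) = fun _ => if k = 0 then 1 else 0 :=
  rfl

/-- The recurrence at level `p`, scaled by `p` so that it also holds for `p = 0` despite the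
truncated subtraction `p - 1`. -/
lemma natCast_mul_logPoly (p : ℕ) (k : ℤ) (x : ℝ) :
    (p : ℝ) * logPoly p k x = (p : ℝ) * ((1 / 2) * logPoly (p - 1) (k - 1) x +
      x * logPoly (p - 1) k x + (1 / 2) * logPoly (p - 1) (k + 1) x) := by
  cases p with
  | zero => simp
  | succ p => rw [logPoly_succ, Nat.add_sub_cancel]

lemma logPoly_hasDerivAt (p : ℕ) (k : ℤ) (x : ℝ) :
    HasDerivAt (fun t : ℝ => logPoly p k t) (p * logPoly (p - 1) k x) x := by
  induction p generalizing k with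
  | zero =>
    rw [logPoly_zero_s9, Nat.cast_zero, zero_mul]
    exact hasDerivAt_const x _
  | succ p ih =>
    have hderiv := (((ih (k - 1)).const_mul (1 / 2)).add ((hasDerivAt_id' x).mul (ih k))).add
      ((ih (k + 1)).const_mul (1 / 2))
    -- the function in `hderiv` is `logPoly (p + 1) k` after unfolding the recursion
    refine hderiv.congr_deriv ?_
    rw [Nat.add_sub_cancel, Nat.cast_succ, add_mul, one_mul, natCast_mul_logPoly]
    ring

theorem logPoly_deriv_general (p : ℕ) (k : ℤ) (x : ℝ) :
    deriv (fun t : ℝ => logPoly p k t) x = p * logPoly (p - 1) k x :=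
  (logPoly_hasDerivAt p k x).deriv

theorem logPoly_deriv (p : ℕ) (hp : 1 ≤ p) (k : ℤ) (x : ℝ) :
    deriv (fun t : ℝ => logPoly p k t) x = p * logPoly (p - 1) k x :=
  logPoly_deriv_general p k x
end

section
/- For η > 0 and ψ ∈ ℝ, (cosh η − cos ψ)·log(cosh η − cos ψ) = (1 + η − log 2)·cosh η − sinh η + cos ψ·(log 2 − 1 − η − (1/2)e^{−2η}) + 2·Σ_{n=2}^∞ [e^{−nη}·cos(nψ)/(n(n²−1))]·(cosh η + n·sinh η), where the series converges absolutely. -/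
/-!
With `r = e^{-η}` the real part of `-log (1 - r e^{iψ}) = ∑ (r e^{iψ})ⁿ / n` gives
`log (cosh η - cos ψ) = η - log 2 - 2 ∑_{n ≥ 1} rⁿ cos (nψ) / n`. Multiplying by
`cosh η - cos ψ = (r⁻¹ + r) / 2 - cos ψ` and collecting the coefficient of `cos (mψ)` amounts to
the partial fraction decomposition `1 / (m (m² - 1)) = 1 / (2 (m - 1)) - 1 / m + 1 / (2 (m + 1))`
together with `cos ((m + 1) ψ) + cos ((m - 1) ψ) = 2 cos ψ cos (mψ)`; the boundary terms of the
resulting telescoping sums give the closed-form part.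
-/

open Real

-- The `n = 0` term is `1 / 0 = 0`, so the series may run over all of `ℕ`.
theorem Real.hasSum_pow_mul_cos_div {r : ℝ} (hr : |r| < 1) (ψ : ℝ) :
    HasSum (fun n : ℕ => r ^ n * cos (n * ψ) / n) (-log (1 - 2 * r * cos ψ + r ^ 2) / 2) := by
  set z : ℂ := r * Complex.exp (ψ * Complex.I)
  have hz : ‖z‖ < 1 := by simpa [z, Complex.norm_exp_ofReal_mul_I] using hr
  have hnorm_sq : ‖1 - z‖ ^ 2 = 1 - 2 * r * cos ψ + r ^ 2 := by
    rw [Complex.sq_norm, Complex.normSq_apply]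
    simp only [z, Complex.sub_re, Complex.sub_im, Complex.re_ofReal_mul, Complex.im_ofReal_mul,
      Complex.exp_ofReal_mul_I_re, Complex.exp_ofReal_mul_I_im, Complex.one_re, Complex.one_im]
    linear_combination r ^ 2 * sin_sq_add_cos_sq ψ
  convert Complex.hasSum_re (Complex.hasSum_taylorSeries_neg_log hz) using 1
  · funext n
    rw [Complex.div_natCast_re, mul_pow, ← Complex.exp_nat_mul, ← Complex.ofReal_pow,
      Complex.re_ofReal_mul, ← Complex.ofReal_natCast, ← mul_assoc, ← Complex.ofReal_mul,
      Complex.exp_ofReal_mul_I_re]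
  · rw [Complex.neg_re, Complex.log_re, ← hnorm_sq, Real.log_pow]
    push_cast
    ring

theorem Real.hasSum_exp_neg_pow_mul_cos_div {η : ℝ} (hη : 0 < η) (ψ : ℝ) :
    HasSum (fun n : ℕ => exp (-η) ^ n * cos (n * ψ) / n)
      ((η - log 2 - log (cosh η - cos ψ)) / 2) := by
  have hr : |exp (-η)| < 1 := by
    rw [abs_of_pos (exp_pos _), exp_lt_one_iff]
    linarith
  have hD : cosh η - cos ψ ≠ 0 := by
    linarith [cos_le_one ψ, one_lt_cosh.mpr hη.ne']
  have hquad : 1 - 2 * exp (-η) * cos ψ + exp (-η) ^ 2 = 2 * exp (-η) * (cosh η - cos ψ) := by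
    have hinv : exp η * exp (-η) = 1 := by rw [← exp_add, add_neg_cancel, exp_zero]
    rw [cosh_eq]
    linear_combination -hinv
  convert hasSum_pow_mul_cos_div hr ψ using 1
  rw [hquad, log_mul (by positivity) hD, log_mul two_ne_zero (exp_pos _).ne', log_exp]
  ring

theorem Real.summable_pow_mul_cos_div_succ {r : ℝ} (hr : |r| < 1) (ψ : ℝ) :
    Summable (fun n : ℕ => r ^ n * cos (n * ψ) / (n + 1)) := by
  refine .of_norm_bounded (summable_geometric_of_lt_one (abs_nonneg r) hr) fun n => ?_
  rw [norm_div, norm_mul, norm_pow, Real.norm_eq_abs, Real.norm_eq_abs, Real.norm_eq_abs,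
    abs_of_pos (by positivity : (0 : ℝ) < n + 1)]
  refine div_le_of_le_mul₀ (by positivity) (by positivity) ?_
  nlinarith [abs_cos_le_one (n * ψ), pow_nonneg (abs_nonneg r) n, (n.cast_nonneg : (0 : ℝ) ≤ n)]

theorem HasSum.nat_add_sub {G : Type*} [AddCommGroup G] [TopologicalSpace G]
    [IsTopologicalAddGroup G] {f : ℕ → G} {a : G} (hf : HasSum f a) (k : ℕ) :
    HasSum (fun n => f (n + k) - f n) (-∑ i ∈ Finset.range k, f i) := by
  simpa using ((hasSum_nat_add_iff' k).mpr hf).sub hf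

theorem Real.cos_add_two_mul_recurrence (x ψ : ℝ) :
    cos ((x + 2) * ψ) = 2 * cos ψ * cos ((x + 1) * ψ) - cos (x * ψ) := by
  have h₁ := cos_add ((x + 1) * ψ) ψ
  have h₂ := cos_sub ((x + 1) * ψ) ψ
  rw [show (x + 1) * ψ + ψ = (x + 2) * ψ by ring] at h₁
  rw [show (x + 1) * ψ - ψ = x * ψ by ring] at h₂
  linear_combination h₁ + h₂

theorem exp_neg_mul_cos_div_partial_fractions (η ψ : ℝ) (n : ℕ) :
    exp (-((n : ℝ) + 2) * η) * cos (((n : ℝ) + 2) * ψ) /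
        (((n : ℝ) + 2) * (((n : ℝ) + 2) ^ 2 - 1)) * (cosh η + ((n : ℝ) + 2) * sinh η) =
      cos ψ * (exp (-η) ^ (n + 1) * cos (((n + 1 : ℕ) : ℝ) * ψ) / ((n + 1 : ℕ) : ℝ)) +
        exp (-η) * (exp (-η) ^ (n + 2) * cos (((n + 2 : ℕ) : ℝ) * ψ) / (((n + 2 : ℕ) : ℝ) + 1) -
          exp (-η) ^ n * cos (n * ψ) / (n + 1)) / 2 -
        cosh η * (exp (-η) ^ (n + 2) * cos (((n + 2 : ℕ) : ℝ) * ψ) / ((n + 2 : ℕ) : ℝ)) := by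
  have hexp : exp (-((n : ℝ) + 2) * η) = exp (-η) ^ (n + 2) := by
    rw [← exp_nat_mul]; push_cast; ring_nf
  have hr : exp (-η) ≠ 0 := (exp_pos _).ne'
  have hn : (0 : ℝ) ≤ n := n.cast_nonneg
  have h₁ : (n : ℝ) + 1 ≠ 0 := by positivity
  have h₂ : (n : ℝ) + 2 ≠ 0 := by positivity
  have h₃ : ((n : ℝ) + 2) ^ 2 - 1 ≠ 0 := by nlinarith
  rw [hexp, cosh_eq, sinh_eq, show exp η = (exp (-η))⁻¹ by rw [exp_neg, inv_inv]]
  push_cast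
  rw [cos_add_two_mul_recurrence]
  field_simp
  ring

theorem cosh_sub_cos_mul_log_fourier (η ψ : ℝ) (hη : 0 < η) :
    (Summable fun n : ℕ =>
      |Real.exp (-((n : ℝ) + 2) * η) * Real.cos (((n : ℝ) + 2) * ψ) /
          (((n : ℝ) + 2) * (((n : ℝ) + 2) ^ 2 - 1)) *
        (Real.cosh η + ((n : ℝ) + 2) * Real.sinh η)|) ∧
    (Real.cosh η - Real.cos ψ) * Real.log (Real.cosh η - Real.cos ψ) =
      (1 + η - Real.log 2) * Real.cosh η - Real.sinh η +
        Real.cos ψ * (Real.log 2 - 1 - η - (1 / 2) * Real.exp (-2 * η)) +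
        2 * ∑' n : ℕ,
          Real.exp (-((n : ℝ) + 2) * η) * Real.cos (((n : ℝ) + 2) * ψ) /
              (((n : ℝ) + 2) * (((n : ℝ) + 2) ^ 2 - 1)) *
            (Real.cosh η + ((n : ℝ) + 2) * Real.sinh η) := by
  set r := exp (-η)
  have hr : |r| < 1 := by rw [abs_of_pos (exp_pos _), exp_lt_one_iff]; linarith
  set g : ℕ → ℝ := fun k => r ^ k * cos (k * ψ) / k
  set h : ℕ → ℝ := fun k => r ^ k * cos (k * ψ) / (k + 1)
  set L := (η - log 2 - log (cosh η - cos ψ)) / 2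
  have hg : HasSum g L := hasSum_exp_neg_pow_mul_cos_div hη ψ
  have hh : HasSum h (∑' k, h k) := (summable_pow_mul_cos_div_succ hr ψ).hasSum
  set τ : ℕ → ℝ := fun n => exp (-((n : ℝ) + 2) * η) * cos (((n : ℝ) + 2) * ψ) /
      (((n : ℝ) + 2) * (((n : ℝ) + 2) ^ 2 - 1)) * (cosh η + ((n : ℝ) + 2) * sinh η)
  have hτ_eq (n : ℕ) :
      τ n = cos ψ * g (n + 1) + r * (h (n + 2) - h n) / 2 - cosh η * g (n + 2) :=
    exp_neg_mul_cos_div_partial_fractions η ψ n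
  have hτ : HasSum τ (cos ψ * L - r * (1 + r * cos ψ / 2) / 2 - cosh η * (L - r * cos ψ)) := by
    have hsum := ((((hasSum_nat_add_iff' 1).mpr hg).mul_left (cos ψ)).add
      (((hh.nat_add_sub 2).mul_left r).div_const 2)).sub
      (((hasSum_nat_add_iff' 2).mpr hg).mul_left (cosh η))
    rw [funext hτ_eq]
    convert hsum using 1
    · rfl
    · simp [Finset.sum_range_succ, g, h]
      ring
  refine ⟨hτ.summable.abs, ?_⟩
  rw [hτ.tsum_eq, show exp (-2 * η) = r ^ 2 by rw [← exp_nat_mul]; ring_nf]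
  simp only [L, r, cosh_eq, sinh_eq, exp_neg]
  field_simp
  ring
end

section
/- For p ∈ ℕ₀ and n ∈ ℕ₀, lim_{ν→0} d/dν [1/((ν+p+1)_n)] = (p!/(p+n)!)·(ψ(p+1) − ψ(p+1+n)), where (z)_n is the Pochhammer symbol and ψ is the digamma function. -/
/-!
The reciprocal `1/P` of `P(ν) = ∏ (ν + p + 1 + i)` has derivative `-(P'/P)/P`, and the logarithmic
derivative `P'/P` at `0` is `∑ 1/(p + 1 + i)`. Iterating `ψ(x + 1) = ψ(x) + 1/x` (the logarithmic
derivative of `Γ(x + 1) = x Γ(x)`) produces the same sum as `ψ(p + 1 + n) - ψ(p + 1)`, while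
`P(0) = (p + n)!/p!`.
-/

/-- The digamma function `ψ = Γ'/Γ`. -/
noncomputable def digamma (x : ℝ) : ℝ := deriv Real.Gamma x / Real.Gamma x

open Finset Nat

theorem logDeriv_prod_add {𝕜 ι : Type*} [NontriviallyNormedField 𝕜] (s : Finset ι) (a : ι → 𝕜)
    {x : 𝕜} (h : ∀ i ∈ s, x + a i ≠ 0) :
    logDeriv (fun y ↦ ∏ i ∈ s, (y + a i)) x = ∑ i ∈ s, 1 / (x + a i) := by
  rw [logDeriv_prod h fun i _ ↦ by fun_prop]
  refine sum_congr rfl fun i _ ↦ ?_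
  simp [logDeriv_apply]

theorem deriv_one_div_eq_neg_logDeriv_div {𝕜 : Type*} [NontriviallyNormedField 𝕜] {f : 𝕜 → 𝕜}
    {x : 𝕜} (hf : DifferentiableAt 𝕜 f x) (hx : f x ≠ 0) :
    deriv (fun y ↦ 1 / f y) x = -logDeriv f x / f x := by
  simp only [one_div, deriv_fun_inv'' hf hx, logDeriv_apply]
  ring

theorem digamma_add_one {x : ℝ} (hx : ∀ m : ℕ, x ≠ -m) : digamma (x + 1) = digamma x + 1 / x := by
  have hx0 : x ≠ 0 := by simpa using hx 0
  have hΓ : DifferentiableAt ℝ Real.Gamma x := Real.differentiableAt_Gamma hx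
  have hΓ₁ : DifferentiableAt ℝ Real.Gamma (x + 1) := Real.differentiableAt_Gamma fun m h ↦
    hx (m + 1) (by push_cast; linarith)
  have hshift : Real.Gamma ∘ (· + 1) =ᶠ[nhds x] fun y ↦ y * Real.Gamma y := by
    filter_upwards [eventually_ne_nhds hx0] with y hy using Real.Gamma_add_one hy
  calc digamma (x + 1) = logDeriv (Real.Gamma ∘ (· + 1)) x := by
        rw [logDeriv_comp (g := (· + 1)) hΓ₁ (by fun_prop)]; simp [digamma, logDeriv_apply]
    _ = logDeriv (fun y ↦ y * Real.Gamma y) x := (logDeriv_congr_nhds hshift).eq_of_nhds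
    _ = digamma x + 1 / x := by
        rw [logDeriv_mul (f := fun y ↦ y) x hx0 (Real.Gamma_ne_zero hx) differentiableAt_id hΓ,
          add_comm]
        simp [digamma, logDeriv_apply]

theorem digamma_add_nat {x : ℝ} (hx : ∀ m : ℕ, x ≠ -m) (n : ℕ) :
    digamma (x + n) = digamma x + ∑ i ∈ range n, 1 / (x + i) := by
  induction n with
  | zero => simp
  | succ k ih =>
    have hxk : ∀ m : ℕ, x + k ≠ -m := fun m h ↦ hx (m + k) (by push_cast; linarith)
    rw [cast_succ, ← add_assoc, digamma_add_one hxk, ih, sum_range_succ, add_assoc]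

theorem factorial_mul_prod_range_add_one (p n : ℕ) :
    (p ! : ℝ) * ∏ i ∈ range n, ((p : ℝ) + 1 + i) = (p + n)! := by
  rw [← factorial_mul_ascFactorial, ascFactorial_eq_prod_range]
  push_cast
  rfl

theorem deriv_inv_pochhammer (p n : ℕ) :
    deriv (fun ν : ℝ => 1 / ∏ i ∈ Finset.range n, (ν + (p : ℝ) + 1 + i)) 0 =
      ((p.factorial : ℝ) / (p + n).factorial) *
        (digamma ((p : ℝ) + 1) - digamma ((p : ℝ) + 1 + n)) := by
  set a : ℕ → ℝ := fun i ↦ (p : ℝ) + 1 + i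
  have ha : ∀ i ∈ range n, (0 : ℝ) + a i ≠ 0 := fun i _ ↦ by positivity
  have hP : ∏ i ∈ range n, ((0 : ℝ) + a i) ≠ 0 := prod_ne_zero_iff.2 ha
  have hshape : (fun ν : ℝ ↦ 1 / ∏ i ∈ range n, (ν + p + 1 + i)) =
      fun ν ↦ 1 / ∏ i ∈ range n, (ν + a i) := by
    funext ν; simp only [a, add_assoc]
  rw [hshape, deriv_one_div_eq_neg_logDeriv_div (by fun_prop) hP, logDeriv_prod_add _ _ ha,
    digamma_add_nat (fun m ↦ ((neg_nonpos.2 m.cast_nonneg).trans_lt (by positivity)).ne') n,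
    ← factorial_mul_prod_range_add_one, div_mul_cancel_left₀ (by positivity)]
  simp only [zero_add, a]
  ring
end
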